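/- arXiv:2512.09054 — 5 statements merged into one kernel-verified Lean document; each statement's English description precedes it below -/
import Mathlib

section
/- The min-max isotonic regression formula yields a monotone function: if for data points x₁ ⪯ x₂ ⪯ … ⪯ xₙ (totally ordered) with weights wᵢ > 0 and values yᵢ we define ĝ(xᵢ) = min over l ≥ i of (max over u ≤ i of Avg(u→l)), where Avg(u→l) = (Σ_{j=u}^{l} wⱼyⱼ)/(Σ_{j=u}^{l} wⱼ), then i ≤ j implies ĝ(xᵢ) ≤ ĝ(xⱼ). -/
open Finset

/-- Raising `i` shrinks the range `l ≥ i` of the outer minimum and enlarges the range `u ≤ i` of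
the inner maximum. -/
theorem Finset.monotone_inf'_Ici_sup'_Iic {α β : Type*} [Preorder α] [LocallyFiniteOrderTop α]
    [LocallyFiniteOrderBot α] [Lattice β] (f : α → α → β) :
    Monotone fun i => (Ici i).inf' ⟨i, mem_Ici.2 le_rfl⟩ fun l =>
      (Iic i).sup' ⟨i, mem_Iic.2 le_rfl⟩ fun u => f u l := by
  intro i j hij
  calc (Ici i).inf' _ (fun l => (Iic i).sup' _ fun u => f u l)
      ≤ (Ici j).inf' ⟨j, mem_Ici.2 le_rfl⟩ (fun l => (Iic i).sup' _ fun u => f u l) :=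
        inf'_mono _ (Ici_subset_Ici.2 hij) _
    _ ≤ (Ici j).inf' _ (fun l => (Iic j).sup' _ fun u => f u l) :=
        inf'_mono_fun fun l _ => sup'_mono _ (Iic_subset_Iic.2 hij) _

theorem stmt5_general (n : ℕ)
    (Avg : Fin n → Fin n → ℝ)
    (g : Fin n → ℝ)
    (hg : ∀ i, g i =
      (Finset.Ici i).inf' ⟨i, Finset.mem_Ici.2 le_rfl⟩ (fun l =>
        (Finset.Iic i).sup' ⟨i, Finset.mem_Iic.2 le_rfl⟩ (fun u => Avg u l))) :
    ∀ i j : Fin n, i ≤ j → g i ≤ g j := by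
  intro i j hij
  rw [hg i, hg j]
  exact monotone_inf'_Ici_sup'_Iic Avg hij

/-- The min-max isotonic regression formula yields a monotone function: with
`ĝ(i) = min_{l ≥ i} max_{u ≤ i} Avg(u→l)` for weighted averages over index
intervals, `i ≤ j` implies `ĝ(i) ≤ ĝ(j)`. -/
theorem stmt5 (n : ℕ) (w y : Fin n → ℝ) (hw : ∀ i, 0 < w i)
    (Avg : Fin n → Fin n → ℝ)
    (hAvg : ∀ u l, Avg u l =
      (∑ j ∈ Finset.Icc u l, w j * y j) / (∑ j ∈ Finset.Icc u l, w j))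
    (g : Fin n → ℝ)
    (hg : ∀ i, g i =
      (Finset.Ici i).inf' ⟨i, Finset.mem_Ici.2 le_rfl⟩ (fun l =>
        (Finset.Iic i).sup' ⟨i, Finset.mem_Iic.2 le_rfl⟩ (fun u => Avg u l))) :
    ∀ i j : Fin n, i ≤ j → g i ≤ g j :=
  stmt5_general n Avg g hg
end

section
/- Let y₁,…,yₙ ∈ ℝ with positive weights w₁,…,wₙ, and suppose the full index set [n] is a maximizer of the weighted average over all suffix sets (upper sets) S_l = {l, l+1, …, n}, i.e., Avg([n]) ≥ Avg(S_l) for every 1 ≤ l ≤ n. Then the constrained minimization of Σᵢ wᵢ(g(i) − yᵢ)² over nondecreasing g with p̲ ≤ g ≤ p̄ is solved by the constant function g ≡ max(p̲, min(p̄, Avg([n]))). -/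
/-!
Let `μ = Avg [n]` and let `c` be `μ` clipped to `[p̲, p̄]`. For `g` with values in `[p̲, p̄]`,
`Σ wᵢ (gᵢ - yᵢ)² - Σ wᵢ (c - yᵢ)² = Σ wᵢ (gᵢ - c)² + 2 Σ wᵢ (c - μ)(gᵢ - c) + 2 Σ gᵢ wᵢ (μ - yᵢ)`
(the `c`-multiple of `Σ wᵢ (μ - yᵢ) = 0` drops out). The middle sum is nonnegative because
clipping is the projection onto the interval. In the last sum, maximality of `[n]` says that
every suffix sum of `wᵢ (μ - yᵢ)` is nonnegative, so summation by parts against the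
nondecreasing `g` makes it nonnegative too.
-/
open Finset

theorem Monotone.apply_zero_mul_sum_le_sum_mul {R : Type*} [CommRing R] [LinearOrder R]
    [IsStrictOrderedRing R] {n : ℕ} {f g : Fin (n + 1) → R} (hg : Monotone g)
    (hf : ∀ l, 0 ≤ ∑ i ∈ Ici l, f i) :
    g 0 * ∑ i, f i ≤ ∑ i, g i * f i := by
  induction n with
  | zero => simp
  | succ n ih =>
    have htail : ∀ l : Fin (n + 1), 0 ≤ ∑ i ∈ Ici l, f i.succ := fun l => by
      simpa [Fin.sum_Ici_succ] using hf l.succ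
    have hhead : g 0 * ∑ i : Fin (n + 1), f i.succ ≤ g 1 * ∑ i : Fin (n + 1), f i.succ :=
      mul_le_mul_of_nonneg_right (hg (Fin.zero_le 1)) (by simpa using htail 0)
    have hrest := ih (hg.comp Fin.strictMono_succ.monotone) htail
    rw [Fin.sum_univ_succ f, Fin.sum_univ_succ (fun i => g i * f i), mul_add]
    simp only [Function.comp_apply, Fin.succ_zero_eq_one] at hrest
    linarith

theorem sub_max_min_mul_sub_max_min_nonneg {α : Type*} [CommRing α] [LinearOrder α]
    [IsStrictOrderedRing α] {lo hi x : α} (hlo : lo ≤ x) (hhi : x ≤ hi) (a : α) :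
    0 ≤ (max lo (min hi a) - a) * (x - max lo (min hi a)) := by
  rcases le_total a lo with ha | ha
  · rw [max_eq_left (min_le_of_right_le ha)]
    exact mul_nonneg (sub_nonneg.2 ha) (sub_nonneg.2 hlo)
  rcases le_total a hi with ha' | ha'
  · simp [min_eq_right ha', max_eq_right ha]
  · rw [min_eq_left ha', max_eq_right (hlo.trans hhi)]
    exact mul_nonneg_of_nonpos_of_nonpos (sub_nonpos.2 ha') (sub_nonpos.2 hhi)

theorem Finset.sum_mul_sub_eq_sum_mul_sub_div {ι K : Type*} [Field K] (s : Finset ι)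
    (w y : ι → K) (hs : ∑ i ∈ s, w i ≠ 0) (a : K) :
    ∑ i ∈ s, w i * (a - y i) = (∑ i ∈ s, w i) * (a - (∑ i ∈ s, w i * y i) / ∑ i ∈ s, w i) := by
  rw [mul_sub, mul_div_cancel₀ _ hs, sum_mul]
  simp only [mul_sub, sum_sub_distrib, mul_comm]

theorem stmt6_general (n : ℕ) (w y : Fin n → ℝ) (hw : ∀ i, 0 < w i)
    (Avg : Finset (Fin n) → ℝ)
    (hAvg : ∀ S, Avg S = (∑ i ∈ S, w i * y i) / (∑ i ∈ S, w i))
    (hmax : ∀ l : Fin n, Avg (Finset.Ici l) ≤ Avg Finset.univ)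
    (lo hi : ℝ) :
    ∀ g : Fin n → ℝ, Monotone g → (∀ i, lo ≤ g i ∧ g i ≤ hi) →
      ∑ i, w i * (max lo (min hi (Avg Finset.univ)) - y i) ^ 2 ≤
        ∑ i, w i * (g i - y i) ^ 2 := by
  intro g hg hbd
  rcases n with _ | n
  · simp
  set μ := Avg univ
  set c := max lo (min hi μ)
  have hAvg_weighted : ∀ S : Finset (Fin (n + 1)), S.Nonempty →
      ∑ i ∈ S, w i * (μ - y i) = (∑ i ∈ S, w i) * (μ - Avg S) := fun S hS => by
    rw [hAvg S, S.sum_mul_sub_eq_sum_mul_sub_div w y (sum_pos (fun i _ => hw i) hS).ne']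
  have hsuffix : ∀ l, 0 ≤ ∑ i ∈ Ici l, w i * (μ - y i) := fun l => by
    rw [hAvg_weighted _ nonempty_Ici]
    exact mul_nonneg (sum_nonneg fun i _ => (hw i).le) (sub_nonneg.2 (hmax l))
  have htotal : ∑ i, w i * (μ - y i) = 0 := by
    rw [hAvg_weighted _ univ_nonempty, sub_self, mul_zero]
  have hpairing := hg.apply_zero_mul_sum_le_sum_mul hsuffix
  rw [htotal, mul_zero] at hpairing
  have hclamp : ∀ i, 0 ≤ w i * ((c - μ) * (g i - c)) := fun i =>
    mul_nonneg (hw i).le (sub_max_min_mul_sub_max_min_nonneg (hbd i).1 (hbd i).2 μ)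
  have hexpand : ∀ i, w i * (g i - y i) ^ 2 = w i * (c - y i) ^ 2 + w i * (g i - c) ^ 2
      + 2 * (w i * ((c - μ) * (g i - c))) + 2 * (g i * (w i * (μ - y i)))
      - 2 * c * (w i * (μ - y i)) := fun i => by ring
  simp only [hexpand, sum_sub_distrib, sum_add_distrib, ← mul_sum, htotal]
  have hclamp_sum := sum_nonneg fun i (_ : i ∈ univ) => hclamp i
  have hsq_sum := sum_nonneg fun i (_ : i ∈ univ) => mul_nonneg (hw i).le (sq_nonneg (g i - c))
  linarith

/-- If the full index set is a maximizer of the weighted average over all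
suffix (upper) sets, then the bounded isotonic least-squares problem is solved
by the constant function equal to the weighted average clipped to `[p̲, p̄]`. -/
theorem stmt6 (n : ℕ) (hn : 0 < n) (w y : Fin n → ℝ) (hw : ∀ i, 0 < w i)
    (Avg : Finset (Fin n) → ℝ)
    (hAvg : ∀ S, Avg S = (∑ i ∈ S, w i * y i) / (∑ i ∈ S, w i))
    (hmax : ∀ l : Fin n, Avg (Finset.Ici l) ≤ Avg Finset.univ)
    (lo hi : ℝ) (hlh : lo ≤ hi) :
    ∀ g : Fin n → ℝ, Monotone g → (∀ i, lo ≤ g i ∧ g i ≤ hi) →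
      ∑ i, w i * (max lo (min hi (Avg Finset.univ)) - y i) ^ 2 ≤
        ∑ i, w i * (g i - y i) ^ 2 :=
  stmt6_general n w y hw Avg hAvg hmax lo hi
end

section
/- If (L,U) is a projection pair for the isotonic regression problem on a finite poset X, meaning U is an upper set, L = X \ U, and there exists d ∈ ℝ with (g|_L)*(x) ≤ d ≤ (g|_U)*(z) for all x ∈ L, z ∈ U, then the solution of the weighted least-squares isotonic regression on X restricted to L equals (g|_L)* and restricted to U equals (g|_U)*. In other words, the global isotonic least-squares fit is the union of the separate fits on L and U. -/
/-!
Glue the two restricted fits into `h := U.piecewise gU gL`. Because `U` is an upper set and `d`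
separates the fits, `h` is monotone on all of `X`, and its loss is the sum of the two restricted
optimal losses, which is at most the loss of the global fit. Since the weighted squared loss is
strictly convex, the global minimiser over the convex set of monotone functions is unique, so the
global fit is `h`.
-/

open Finset

section WeightedSquares

variable {α : Type*} (s : Finset α) (w y : α → ℝ)

lemma sum_mul_sq_midpoint (f g : α → ℝ) :
    ∑ i ∈ s, w i * (((1 / 2 : ℝ) • f + (1 / 2 : ℝ) • g) i - y i) ^ 2 =
      (∑ i ∈ s, w i * (f i - y i) ^ 2 + ∑ i ∈ s, w i * (g i - y i) ^ 2) / 2 -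
        (∑ i ∈ s, w i * (f i - g i) ^ 2) / 4 := by
  simp only [← sum_add_distrib, sum_div, ← sum_sub_distrib]
  refine sum_congr rfl fun i _ => ?_
  simp only [Pi.add_apply, Pi.smul_apply, smul_eq_mul]
  ring

variable {s w y}

lemma eqOn_of_sum_mul_sq_sub_nonpos (hw : ∀ i ∈ s, 0 < w i) {f g : α → ℝ}
    (h : ∑ i ∈ s, w i * (f i - g i) ^ 2 ≤ 0) : ∀ i ∈ s, f i = g i := by
  have hterm : ∀ i ∈ s, 0 ≤ w i * (f i - g i) ^ 2 := fun i hi =>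
    mul_nonneg (hw i hi).le (sq_nonneg _)
  intro i hi
  have hzero := (sum_eq_zero_iff_of_nonneg hterm).mp (le_antisymm h (sum_nonneg hterm)) i hi
  have hsq := (mul_eq_zero.mp hzero).resolve_left (hw i hi).ne'
  exact sub_eq_zero.mp (pow_eq_zero_iff two_ne_zero |>.mp hsq)

lemma IsMinOn.eqOn_of_sum_mul_sq_le {C : Set (α → ℝ)} {f g : α → ℝ}
    (hmin : IsMinOn (fun h => ∑ i ∈ s, w i * (h i - y i) ^ 2) C f)
    (hC : Convex ℝ C) (hw : ∀ i ∈ s, 0 < w i) (hf : f ∈ C) (hg : g ∈ C)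
    (hle : ∑ i ∈ s, w i * (g i - y i) ^ 2 ≤ ∑ i ∈ s, w i * (f i - y i) ^ 2) :
    ∀ i ∈ s, f i = g i := by
  have hmid := isMinOn_iff.mp hmin ((1 / 2 : ℝ) • f + (1 / 2 : ℝ) • g)
    (hC hf hg (by norm_num) (by norm_num) (by norm_num))
  simp only [sum_mul_sq_midpoint] at hmid
  exact eqOn_of_sum_mul_sq_sub_nonpos hw (by linarith)

end WeightedSquares

lemma convex_setOf_monotone {α : Type*} [Preorder α] : Convex ℝ {f : α → ℝ | Monotone f} :=
  fun _ hf _ hg _ _ ha hb _ _ _ hxy =>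
    add_le_add (mul_le_mul_of_nonneg_left (hf hxy) ha) (mul_le_mul_of_nonneg_left (hg hxy) hb)

lemma monotone_piecewise_of_isUpperSet {α : Type*} [Preorder α] [DecidableEq α]
    {U : Finset α} (hU : IsUpperSet (U : Set α)) {gU gL : α → ℝ}
    (hgU : MonotoneOn gU U) (hgL : MonotoneOn gL (U : Set α)ᶜ)
    (hsep : ∀ x ∉ U, ∀ z ∈ U, gL x ≤ gU z) : Monotone (U.piecewise gU gL) := by
  intro a b hab
  by_cases hb : b ∈ U
  · by_cases ha : a ∈ U
    · simpa [ha, hb] using hgU ha hb hab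
    · simpa [ha, hb] using hsep a ha b hb
  · have ha : a ∉ U := fun ha => hb (hU hab ha)
    simpa [ha, hb] using hgL ha hb hab

/-- Projection pair theorem: if `(L,U)` is a projection pair (U an upper set,
`L = Uᶜ`, and there is `d` separating the restricted isotonic fits), then the
global weighted least-squares isotonic fit agrees with the restricted fit
`(g|_L)*` on `L` and with `(g|_U)*` on `U`. -/
theorem stmt7 {α : Type*} [Fintype α] [DecidableEq α] [PartialOrder α]
    (w y : α → ℝ) (hw : ∀ i, 0 < w i)
    (U : Finset α) (hU : ∀ a ∈ U, ∀ b, a ≤ b → b ∈ U)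
    (L : Finset α) (hL : L = Uᶜ)
    (gL gU gstar : α → ℝ) (d : ℝ)
    (hgL_iso : ∀ a ∈ L, ∀ b ∈ L, a ≤ b → gL a ≤ gL b)
    (hgL_min : ∀ h : α → ℝ, (∀ a ∈ L, ∀ b ∈ L, a ≤ b → h a ≤ h b) →
      ∑ i ∈ L, w i * (gL i - y i) ^ 2 ≤ ∑ i ∈ L, w i * (h i - y i) ^ 2)
    (hgU_iso : ∀ a ∈ U, ∀ b ∈ U, a ≤ b → gU a ≤ gU b)
    (hgU_min : ∀ h : α → ℝ, (∀ a ∈ U, ∀ b ∈ U, a ≤ b → h a ≤ h b) →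
      ∑ i ∈ U, w i * (gU i - y i) ^ 2 ≤ ∑ i ∈ U, w i * (h i - y i) ^ 2)
    (hdL : ∀ x ∈ L, gL x ≤ d) (hdU : ∀ z ∈ U, d ≤ gU z)
    (hstar_iso : ∀ a b : α, a ≤ b → gstar a ≤ gstar b)
    (hstar_min : ∀ h : α → ℝ, (∀ a b : α, a ≤ b → h a ≤ h b) →
      ∑ i, w i * (gstar i - y i) ^ 2 ≤ ∑ i, w i * (h i - y i) ^ 2) :
    (∀ x ∈ L, gstar x = gL x) ∧ (∀ z ∈ U, gstar z = gU z) := by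
  subst hL
  have h_mono : Monotone (U.piecewise gU gL) :=
    monotone_piecewise_of_isUpperSet (fun a b hab ha => hU a ha b hab)
      (fun a ha b hb => hgU_iso a ha b hb)
      (fun a ha b hb => hgL_iso a (mem_compl.mpr ha) b (mem_compl.mpr hb))
      (fun x hx z hz => (hdL x (mem_compl.mpr hx)).trans (hdU z hz))
  have h_loss :
      ∑ i, w i * (U.piecewise gU gL i - y i) ^ 2 ≤ ∑ i, w i * (gstar i - y i) ^ 2 := by
    rw [← sum_compl_add_sum U, ← sum_compl_add_sum U]
    have loss_compl : ∑ i ∈ Uᶜ, w i * (U.piecewise gU gL i - y i) ^ 2 =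
        ∑ i ∈ Uᶜ, w i * (gL i - y i) ^ 2 :=
      sum_congr rfl fun i hi => by rw [piecewise_eq_of_notMem _ _ _ (mem_compl.mp hi)]
    have loss_U : ∑ i ∈ U, w i * (U.piecewise gU gL i - y i) ^ 2 =
        ∑ i ∈ U, w i * (gU i - y i) ^ 2 :=
      sum_congr rfl fun i hi => by rw [piecewise_eq_of_mem _ _ _ hi]
    rw [loss_compl, loss_U]
    exact add_le_add (hgL_min gstar fun a _ b _ hab => hstar_iso a b hab)
      (hgU_min gstar fun a _ b _ hab => hstar_iso a b hab)
  have h_eq := (isMinOn_iff.mpr hstar_min).eqOn_of_sum_mul_sq_le convex_setOf_monotone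
    (fun i _ => hw i) (show Monotone gstar from hstar_iso) h_mono h_loss
  exact ⟨fun x hx =>
      (h_eq x (mem_univ x)).trans (piecewise_eq_of_notMem _ _ _ (mem_compl.mp hx)),
    fun z hz => (h_eq z (mem_univ z)).trans (piecewise_eq_of_mem _ _ _ hz)⟩
end

section
/- Decomposition lemma for upper-set families: let X = {x₁,…,xₙ} be a finite totally pre-ordered set of grid points in ℕ × ℕ with distinct first coordinates sorted increasingly, and let xᵢ = (i, l). Then the family ũ(i, l+m) of upper sets U with u(i,l+m) ⊆ U and all elements of U having first coordinate ≥ i decomposes as the disjoint union ũ(i, l+m) = ũ(i+1, l+m) ⊎ ũ(i, l), for any m ∈ ℕ with m ≥ 1. -/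
/-- Decomposition lemma for upper-set families on the grid: for the point
`xᵢ = (i, l(i))` and `m ≥ 1`, the family `ũ(i, l(i)+m)` decomposes as the
disjoint union `ũ(i+1, l(i)+m) ⊎ ũ(i, l(i))`. -/
theorem stmt16 (n : ℕ) (l : ℕ → ℕ)
    (X : Set (ℕ × ℕ))
    (hX : X = {p | ∃ i, 1 ≤ i ∧ i ≤ n ∧ p = (i, l i)})
    (u : ℕ → ℕ → Set (ℕ × ℕ))
    (hu : ∀ i j, u i j = {p ∈ X | i ≤ p.1 ∧ j ≤ p.2})
    (ut : ℕ → ℕ → Set (Set (ℕ × ℕ)))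
    (hut : ∀ i j, ut i j = {U | U ⊆ X ∧ u i j ⊆ U ∧ (∀ p ∈ U, i ≤ p.1) ∧
      ∀ a ∈ U, ∀ b ∈ X, a.1 ≤ b.1 → a.2 ≤ b.2 → b ∈ U})
    (i m : ℕ) (hi : 1 ≤ i) (hin : i ≤ n) (hm : 1 ≤ m) :
    ut i (l i + m) = ut (i + 1) (l i + m) ∪ ut i (l i) ∧
      Disjoint (ut (i + 1) (l i + m)) (ut i (l i)) := by
  have hxX : (i, l i) ∈ X := by rw [hX]; exact ⟨i, hi, hin, rfl⟩
  -- unique point per first coordinate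
  have huniq : ∀ p ∈ X, p.1 = i → p = (i, l i) := by
    intro p hp hp1
    rw [hX] at hp
    obtain ⟨k, _, _, rfl⟩ := hp
    simp at hp1; subst hp1; rfl
  constructor
  · ext U
    simp only [hut, hu, Set.mem_union, Set.mem_setOf_eq]
    constructor
    · rintro ⟨hUX, huU, hge, hup⟩
      by_cases hx : (i, l i) ∈ U
      · right
        refine ⟨hUX, ?_, hge, hup⟩
        rintro p ⟨hpX, hp1, hp2⟩
        exact hup (i, l i) hx p hpX hp1 hp2
      · left
        have hge' : ∀ p ∈ U, i + 1 ≤ p.1 := by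
          intro p hp
          rcases Nat.lt_or_ge p.1 (i+1) with h | h
          · exfalso
            have : p.1 = i := le_antisymm (Nat.lt_succ_iff.mp h) (hge p hp)
            exact hx (huniq p (hUX hp) this ▸ hp)
          · exact h
        refine ⟨hUX, ?_, hge', hup⟩
        rintro p ⟨hpX, hp1, hp2⟩
        exact huU ⟨hpX, Nat.le_of_succ_le hp1, hp2⟩
    · rintro (⟨hUX, huU, hge, hup⟩ | ⟨hUX, huU, hge, hup⟩)
      · refine ⟨hUX, ?_, fun p hp => Nat.le_of_succ_le (hge p hp), hup⟩
        rintro p ⟨hpX, hp1, hp2⟩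
        have h1 : i + 1 ≤ p.1 := by
          rcases Nat.lt_or_ge p.1 (i+1) with h | h
          · exfalso
            have hpi : p.1 = i := le_antisymm (Nat.lt_succ_iff.mp h) hp1
            have := huniq p hpX hpi
            subst this
            simp at hp2
            omega
          · exact h
        exact huU ⟨hpX, h1, hp2⟩
      · refine ⟨hUX, ?_, hge, hup⟩
        rintro p ⟨hpX, hp1, hp2⟩
        exact huU ⟨hpX, hp1, le_trans (Nat.le_add_right _ _) hp2⟩
  · rw [Set.disjoint_left]
    intro U hU1 hU2
    rw [hut] at hU1 hU2
    obtain ⟨_, _, hge, _⟩ := hU1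
    obtain ⟨_, huU, _, _⟩ := hU2
    have hx : (i, l i) ∈ U := huU (by rw [hu]; exact ⟨hxX, le_refl _, le_refl _⟩)
    have := hge _ hx
    simp at this
end

section
/- The dynamic-programming recursion for the maximal upper set value is correct: with M(i,j) = max over U ∈ ũ(i,j) of H(U), where H(U) = Σ_{x_t ∈ U} w_t(y_t − b) for a fixed constant b, and xᵢ = (i,l), it holds that M(i,j) = M(i+1,j) + wᵢ(yᵢ − b) if j ≤ l, and M(i,j) = max(M(i+1,j), M(i,l)) if j > l. -/
/-!
Only one point of `X`, namely `x = (i, l i)`, has first coordinate `i`. If `j ≤ l i`, then `x`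
lies in `u(i, j)`, so the sets in `ũ(i, j)` are exactly the sets `insert x V` with `V ∈ ũ(i+1, j)`,
and the maximum shifts by the weight of `x`. If `l i < j`, a set in `ũ(i, j)` either avoids `x`,
and then lies in `ũ(i+1, j)`, or contains `x` and with it all of `u(i, l i)`, so
`ũ(i, j) = ũ(i+1, j) ∪ ũ(i, l i)` and the maximum is the larger of the two maxima.
-/

/-- The paper's `u(i, j)`. -/
def upperCone (X : Finset (ℕ × ℕ)) (i j : ℕ) : Finset (ℕ × ℕ) :=
  X.filter (fun p => i ≤ p.1 ∧ j ≤ p.2)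

/-- The paper's `ũ(i, j)`. -/
def upperSetsFrom (X : Finset (ℕ × ℕ)) (i j : ℕ) : Set (Finset (ℕ × ℕ)) :=
  {U | U ⊆ X ∧ upperCone X i j ⊆ U ∧ (∀ p ∈ U, i ≤ p.1) ∧
    ∀ a ∈ U, ∀ c ∈ X, a.1 ≤ c.1 → a.2 ≤ c.2 → c ∈ U}

namespace upperSetsFrom

variable {X U : Finset (ℕ × ℕ)} {i j k : ℕ}

theorem mono_right {j' : ℕ} (hU : U ∈ upperSetsFrom X i j) (hj : j ≤ j') :
    U ∈ upperSetsFrom X i j' := by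
  refine ⟨hU.1, fun p hp => hU.2.1 ?_, hU.2.2⟩
  simp only [upperCone, Finset.mem_filter] at hp ⊢
  exact ⟨hp.1, hp.2.1, hj.trans hp.2.2⟩

theorem of_mem (hU : U ∈ upperSetsFrom X i j) (hx : (i, k) ∈ U) :
    U ∈ upperSetsFrom X i k := by
  refine ⟨hU.1, fun p hp => ?_, hU.2.2⟩
  simp only [upperCone, Finset.mem_filter] at hp
  exact hU.2.2.2 _ hx p hp.1 hp.2.1 hp.2.2

theorem notMem_of_succ (hU : U ∈ upperSetsFrom X (i + 1) j) : (i, k) ∉ U :=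
  fun h => Nat.not_succ_le_self i (hU.2.2.1 _ h)

section column

variable (hcol : ∀ p ∈ X, p.1 = i → p = (i, k))
include hcol

theorem upperCone_subset_insert : upperCone X i j ⊆ insert (i, k) (upperCone X (i + 1) j) := by
  intro p hp
  simp only [upperCone, Finset.mem_filter, Finset.mem_insert] at hp ⊢
  rcases hp.2.1.eq_or_lt with h | h
  · exact Or.inl (hcol p hp.1 h.symm)
  · exact Or.inr ⟨hp.1, h, hp.2.2⟩

theorem erase_mem_succ (hU : U ∈ upperSetsFrom X i j) :
    U.erase (i, k) ∈ upperSetsFrom X (i + 1) j := by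
  obtain ⟨hUX, hcone, hfst, hup⟩ := hU
  have hfst' : ∀ p ∈ U.erase (i, k), i + 1 ≤ p.1 := by
    intro p hp
    obtain ⟨hpx, hpU⟩ := Finset.mem_erase.1 hp
    exact (hfst p hpU).lt_of_ne fun h => hpx (hcol p (hUX hpU) h.symm)
  refine ⟨(Finset.erase_subset _ _).trans hUX, fun p hp => ?_, hfst', fun a ha c hc h1 h2 => ?_⟩
  · obtain ⟨hpX, hpi, hpj⟩ := Finset.mem_filter.1 hp
    refine Finset.mem_erase.2 ⟨fun h => Nat.not_succ_le_self i (by rwa [h] at hpi), hcone ?_⟩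
    exact Finset.mem_filter.2 ⟨hpX, (Nat.le_succ i).trans hpi, hpj⟩
  · refine Finset.mem_erase.2 ⟨fun h => ?_, hup a (Finset.mem_of_mem_erase ha) c hc h1 h2⟩
    rw [h] at h1
    exact Nat.not_succ_le_self i ((hfst' a ha).trans h1)

theorem insert_mem_of_succ (hx : (i, k) ∈ X) (hj : j ≤ k) {V : Finset (ℕ × ℕ)}
    (hV : V ∈ upperSetsFrom X (i + 1) j) : insert (i, k) V ∈ upperSetsFrom X i j := by
  obtain ⟨hVX, hcone, hfst, hup⟩ := hV
  have hcone' : upperCone X i j ⊆ insert (i, k) V :=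
    (upperCone_subset_insert hcol).trans (Finset.insert_subset_insert _ hcone)
  refine ⟨Finset.insert_subset hx hVX, hcone', fun p hp => ?_, fun a ha c hc h1 h2 => ?_⟩
  · rcases Finset.mem_insert.1 hp with rfl | hp
    · exact le_rfl
    · exact (hfst p hp).trans' (Nat.le_succ i)
  · rcases Finset.mem_insert.1 ha with rfl | ha
    · exact hcone' (Finset.mem_filter.2 ⟨hc, h1, hj.trans h2⟩)
    · exact Finset.mem_insert_of_mem (hup a ha c hc h1 h2)

theorem eq_image_insert (hx : (i, k) ∈ X) (hj : j ≤ k) :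
    upperSetsFrom X i j = insert (i, k) '' upperSetsFrom X (i + 1) j := by
  ext U
  refine ⟨fun hU => ⟨U.erase (i, k), erase_mem_succ hcol hU, Finset.insert_erase ?_⟩, ?_⟩
  · exact hU.2.1 (Finset.mem_filter.2 ⟨hx, le_rfl, hj⟩)
  · rintro ⟨V, hV, rfl⟩
    exact insert_mem_of_succ hcol hx hj hV

theorem mem_of_succ (hkj : k < j) (hU : U ∈ upperSetsFrom X (i + 1) j) :
    U ∈ upperSetsFrom X i j := by
  refine ⟨hU.1, fun p hp => ?_, fun p hp => (hU.2.2.1 p hp).trans' (Nat.le_succ i), hU.2.2.2⟩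
  rcases Finset.mem_insert.1 (upperCone_subset_insert hcol hp) with rfl | hp'
  · exact absurd (Finset.mem_filter.1 hp).2.2 (Nat.not_le.2 hkj)
  · exact hU.2.1 hp'

theorem eq_union (hkj : k < j) :
    upperSetsFrom X i j = upperSetsFrom X (i + 1) j ∪ upperSetsFrom X i k := by
  ext U
  refine ⟨fun hU => ?_, ?_⟩
  · by_cases hx : (i, k) ∈ U
    · exact Or.inr (of_mem hU hx)
    · exact Or.inl (Finset.erase_eq_of_notMem hx ▸ erase_mem_succ hcol hU)
  · rintro (hU | hU)
    · exact mem_of_succ hcol hkj hU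
    · exact mono_right hU hkj.le

theorem image_sum_eq_image_add (f : ℕ × ℕ → ℝ) (hx : (i, k) ∈ X) (hj : j ≤ k) :
    (fun U => ∑ p ∈ U, f p) '' upperSetsFrom X i j =
      (· + f (i, k)) '' ((fun U => ∑ p ∈ U, f p) '' upperSetsFrom X (i + 1) j) := by
  rw [eq_image_insert hcol hx hj, Set.image_image, Set.image_image]
  refine Set.image_congr fun V hV => ?_
  rw [Finset.sum_insert (notMem_of_succ hV), add_comm]

end column

end upperSetsFrom

theorem stmt17_general (n : ℕ) (l : ℕ → ℕ) (w y : ℕ → ℝ) (b : ℝ)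
    (X : Finset (ℕ × ℕ))
    (hX : X = (Finset.Icc 1 n).image (fun i => (i, l i)))
    (u : ℕ → ℕ → Finset (ℕ × ℕ))
    (hu : ∀ i j, u i j = X.filter (fun p => i ≤ p.1 ∧ j ≤ p.2))
    (ut : ℕ → ℕ → Set (Finset (ℕ × ℕ)))
    (hut : ∀ i j, ut i j = {U | U ⊆ X ∧ u i j ⊆ U ∧ (∀ p ∈ U, i ≤ p.1) ∧
      ∀ a ∈ U, ∀ c ∈ X, a.1 ≤ c.1 → a.2 ≤ c.2 → c ∈ U})
    (H : Finset (ℕ × ℕ) → ℝ)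
    (hH : ∀ U, H U = ∑ p ∈ U, w p.1 * (y p.1 - b))
    (M : ℕ → ℕ → ℝ)
    (hM : ∀ i j, IsGreatest (H '' ut i j) (M i j))
    (i j : ℕ) (hi : 1 ≤ i) (hin : i ≤ n) :
    (j ≤ l i → M i j = M (i + 1) j + w i * (y i - b)) ∧
    (l i < j → M i j = max (M (i + 1) j) (M i (l i))) := by
  have hx : (i, l i) ∈ X := hX ▸ Finset.mem_image_of_mem _ (Finset.mem_Icc.2 ⟨hi, hin⟩)
  have hcol : ∀ p ∈ X, p.1 = i → p = (i, l i) := by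
    subst hX
    rintro _ hp rfl
    obtain ⟨t, -, rfl⟩ := Finset.mem_image.1 hp
    rfl
  obtain rfl : ut = upperSetsFrom X := by
    funext i j
    rw [hut, hu]
    rfl
  obtain rfl : H = fun U => ∑ p ∈ U, w p.1 * (y p.1 - b) := funext hH
  refine ⟨fun hj => ?_, fun hj => ?_⟩
  · have hshift := (add_left_mono (a := w i * (y i - b))).map_isGreatest (hM (i + 1) j)
    refine (hM i j).unique ?_
    rwa [upperSetsFrom.image_sum_eq_image_add hcol _ hx hj]
  · have hmax := (hM (i + 1) j).union (hM i (l i))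
    rw [← Set.image_union, ← upperSetsFrom.eq_union hcol hj] at hmax
    exact (hM i j).unique hmax

/-- Correctness of the dynamic-programming recursion for the maximal upper set
value: with `M(i,j) = max_{U ∈ ũ(i,j)} H(U)` for `H(U) = Σ_{x_t ∈ U} w_t(y_t − b)`
and `xᵢ = (i, l(i))`, we have `M(i,j) = M(i+1,j) + wᵢ(yᵢ − b)` when `j ≤ l(i)`,
and `M(i,j) = max(M(i+1,j), M(i, l(i)))` when `j > l(i)`. -/
theorem stmt17 (n : ℕ) (l : ℕ → ℕ) (w y : ℕ → ℝ) (b : ℝ) (hw : ∀ i, 0 < w i)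
    (X : Finset (ℕ × ℕ))
    (hX : X = (Finset.Icc 1 n).image (fun i => (i, l i)))
    (u : ℕ → ℕ → Finset (ℕ × ℕ))
    (hu : ∀ i j, u i j = X.filter (fun p => i ≤ p.1 ∧ j ≤ p.2))
    (ut : ℕ → ℕ → Set (Finset (ℕ × ℕ)))
    (hut : ∀ i j, ut i j = {U | U ⊆ X ∧ u i j ⊆ U ∧ (∀ p ∈ U, i ≤ p.1) ∧
      ∀ a ∈ U, ∀ c ∈ X, a.1 ≤ c.1 → a.2 ≤ c.2 → c ∈ U})
    (H : Finset (ℕ × ℕ) → ℝ)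
    (hH : ∀ U, H U = ∑ p ∈ U, w p.1 * (y p.1 - b))
    (M : ℕ → ℕ → ℝ)
    (hM : ∀ i j, IsGreatest (H '' ut i j) (M i j))
    (i j : ℕ) (hi : 1 ≤ i) (hin : i ≤ n) :
    (j ≤ l i → M i j = M (i + 1) j + w i * (y i - b)) ∧
    (l i < j → M i j = max (M (i + 1) j) (M i (l i))) :=
  stmt17_general n l w y b X hX u hu ut hut H hH M hM i j hi hin
end
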